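/- arXiv:1404.5015 — 5 statements merged into one kernel-verified Lean document; each statement's English description precedes it below -/
import Mathlib

section
/- Let $H$ be a hypergraph in which every edge has size at most $k$ (with $k \geq 2$), and let $S$ be a vertex cover of $H$. Then there exist a subhypergraph $H' \subseteq H$ and a subset $S' \subseteq S$ such that $|H'| \geq \frac{k}{2^k}|H|$ and every edge of $H'$ intersects $S'$ in exactly one vertex. -/
/-!
Pick `T ⊆ S` uniformly at random. An edge `e` meeting `S` in `m ≥ 1` vertices meets `T` in
exactly one vertex for `m · 2^(|S| - m)` of the `2^|S|` choices of `T`, i.e. with probability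
`m / 2^m ≥ k / 2^k`, since `m ↦ m / 2^m` is non-increasing on `m ≥ 1` and `m ≤ k`. So the
expected number of edges cut exactly once by `T` is at least `(k / 2^k) |H|`, and some `T`
attains the expectation.
-/

open Finset

theorem Nat.mul_two_pow_le_mul_two_pow {m k : ℕ} (hm : 1 ≤ m) (hmk : m ≤ k) :
    k * 2 ^ m ≤ m * 2 ^ k := by
  induction k, hmk using Nat.le_induction with
  | base => exact le_rfl
  | succ k _ ih =>
    calc (k + 1) * 2 ^ m ≤ 2 * (k * 2 ^ m) := by nlinarith [Nat.one_le_two_pow (n := m)]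
      _ ≤ 2 * (m * 2 ^ k) := by omega
      _ = m * 2 ^ (k + 1) := by ring

namespace Finset

variable {V : Type*} [DecidableEq V]

/-- The subsets of `S` cutting `e` exactly once include `insert v U` for `v ∈ e ∩ S` and
`U ⊆ S \ e`; these are distinct since `v` and `U` are recovered by intersecting with `e`
and removing `e`. -/
theorem mul_two_pow_le_card_filter_powerset_card_inter_eq_one (e S : Finset V) :
    #(e ∩ S) * 2 ^ (#S - #(e ∩ S)) ≤ #{T ∈ S.powerset | #(e ∩ T) = 1} := by
  have inter_insert : ∀ v ∈ e, ∀ U ⊆ S \ e, e ∩ insert v U = {v} := by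
    intro v hv U hU
    ext x
    simp only [mem_inter, mem_insert, mem_singleton]
    constructor
    · rintro ⟨hxe, rfl | hxU⟩
      · rfl
      · exact absurd hxe (mem_sdiff.mp (hU hxU)).2
    · rintro rfl
      exact ⟨hv, Or.inl rfl⟩
  have insert_sdiff : ∀ v ∈ e, ∀ U ⊆ S \ e, insert v U \ e = U := by
    intro v hv U hU
    rw [insert_sdiff_of_mem _ hv, sdiff_eq_self_of_disjoint]
    exact disjoint_of_subset_left hU disjoint_sdiff_self_left
  calc #(e ∩ S) * 2 ^ (#S - #(e ∩ S)) = #((e ∩ S) ×ˢ (S \ e).powerset) := by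
        rw [card_product, card_powerset, card_sdiff]
    _ ≤ #{T ∈ S.powerset | #(e ∩ T) = 1} := by
      refine card_le_card_of_injOn (fun p => insert p.1 p.2) ?_ ?_
      · rintro ⟨v, U⟩ hp
        simp only [coe_product, Set.mem_prod, mem_coe, mem_inter, mem_powerset] at hp
        obtain ⟨⟨hve, hvS⟩, hU⟩ := hp
        simp only [coe_filter, mem_powerset, Set.mem_ofPred_eq]
        refine ⟨insert_subset hvS (hU.trans sdiff_subset), ?_⟩
        rw [inter_insert v hve U hU, card_singleton]
      · rintro ⟨v, U⟩ hp ⟨v', U'⟩ hp' heq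
        simp only [coe_product, Set.mem_prod, mem_coe, mem_inter, mem_powerset] at hp hp' heq
        obtain ⟨⟨hve, -⟩, hU⟩ := hp
        obtain ⟨⟨hve', -⟩, hU'⟩ := hp'
        have hv : v = v' := singleton_inj.mp <| by
          rw [← inter_insert v hve U hU, ← inter_insert v' hve' U' hU', heq]
        have hU : U = U' := by
          rw [← insert_sdiff v hve U hU, ← insert_sdiff v' hve' U' hU', heq]
        rw [hv, hU]

theorem mul_two_pow_card_le_card_filter_powerset_card_inter_eq_one {k : ℕ} {e S : Finset V}
    (he : #e ≤ k) (heS : (e ∩ S).Nonempty) :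
    k * 2 ^ #S ≤ 2 ^ k * #{T ∈ S.powerset | #(e ∩ T) = 1} := by
  set m := #(e ∩ S)
  have hmS : m ≤ #S := card_le_card inter_subset_right
  calc k * 2 ^ #S = k * 2 ^ m * 2 ^ (#S - m) := by
        rw [mul_assoc, ← pow_add, Nat.add_sub_cancel' hmS]
    _ ≤ m * 2 ^ k * 2 ^ (#S - m) :=
        Nat.mul_le_mul_right _ <| Nat.mul_two_pow_le_mul_two_pow heS.card_pos
          ((card_le_card inter_subset_left).trans he)
    _ = 2 ^ k * (m * 2 ^ (#S - m)) := by ring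
    _ ≤ 2 ^ k * #{T ∈ S.powerset | #(e ∩ T) = 1} :=
        Nat.mul_le_mul_left _ (mul_two_pow_le_card_filter_powerset_card_inter_eq_one e S)

end Finset

theorem stmt_1_general {V : Type*} [DecidableEq V] (k : ℕ)
    (H : Finset (Finset V)) (hsize : ∀ e ∈ H, e.card ≤ k)
    (S : Finset V) (hcover : ∀ e ∈ H, ∃ v ∈ S, v ∈ e) :
    ∃ H' ⊆ H, ∃ S' ⊆ S, (k : ℝ) / 2 ^ k * H.card ≤ (H'.card : ℝ) ∧
      ∀ e ∈ H', (e ∩ S').card = 1 := by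
  set cut : Finset V → Finset (Finset V) := fun T => {e ∈ H | #(e ∩ T) = 1}
  have double_count : k * 2 ^ #S * #H ≤ 2 ^ k * ∑ T ∈ S.powerset, #(cut T) := by
    simp only [cut, card_filter]
    rw [sum_comm, mul_sum, mul_comm, ← smul_eq_mul, ← sum_const]
    refine sum_le_sum fun e he => ?_
    obtain ⟨v, hvS, hve⟩ := hcover e he
    rw [← card_filter]
    exact mul_two_pow_card_le_card_filter_powerset_card_inter_eq_one (hsize e he)
      ⟨v, mem_inter.mpr ⟨hve, hvS⟩⟩
  have average :
      ∑ _T ∈ S.powerset, (k : ℝ) / 2 ^ k * #H ≤ ∑ T ∈ S.powerset, (#(cut T) : ℝ) := by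
    have hreal : (k : ℝ) * 2 ^ #S * #H ≤ 2 ^ k * ∑ T ∈ S.powerset, (#(cut T) : ℝ) := by
      exact_mod_cast double_count
    rw [sum_const, card_powerset, nsmul_eq_mul, Nat.cast_pow, Nat.cast_two]
    calc (2 : ℝ) ^ #S * (k / 2 ^ k * #H) = k * 2 ^ #S * #H / 2 ^ k := by ring
      _ ≤ ∑ T ∈ S.powerset, (#(cut T) : ℝ) := by rwa [div_le_iff₀' (by positivity)]
  obtain ⟨T, hT, hcut⟩ := exists_le_of_sum_le ⟨∅, empty_mem_powerset S⟩ average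
  exact ⟨cut T, filter_subset _ _, T, mem_powerset.mp hT, hcut,
    fun e he => (mem_filter.mp he).2⟩

/-- If every edge of `H` has size at most `k` and `S` is a vertex cover of `H`,
then there are `H' ⊆ H` and `S' ⊆ S` with `|H'| ≥ (k/2^k)|H|` such that every
edge of `H'` meets `S'` in exactly one vertex. -/
theorem stmt_1 {V : Type*} [DecidableEq V] (k : ℕ) (hk : 2 ≤ k)
    (H : Finset (Finset V)) (hsize : ∀ e ∈ H, e.card ≤ k)
    (S : Finset V) (hcover : ∀ e ∈ H, ∃ v ∈ S, v ∈ e) :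
    ∃ H' ⊆ H, ∃ S' ⊆ S, (k : ℝ) / 2 ^ k * H.card ≤ (H'.card : ℝ) ∧
      ∀ e ∈ H', (e ∩ S').card = 1 :=
  stmt_1_general k H hsize S hcover
end

section
/- Let $k, \ell, s$ be positive integers with $k \geq 2$. Let $G$ be a graph with minimum degree at least $(k+1)\ell + s$, and let $\phi$ assign to each edge of $G$ a $k$-element subset of a set $S$, such that incident edges receive disjoint sets (strongly proper). Let $x$ be a vertex and $S_0 \subseteq S$ with $|S_0| \leq s$. Then $G$ contains a path $P$ of length $\ell$ starting at $x$ such that the color sets of the edges of $P$ are pairwise disjoint and each is disjoint from $S_0$. -/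
/-!
Greedy extension: a strongly rainbow path `P` of length `t < ℓ` ending at `y` that avoids `S₀`
forbids at most `t` neighbours of `y` (those already on `P`) and, by strong properness, at most
one neighbour per colour of `S₀` or of `P`, i.e. at most `s + k t` more. Since
`t + s + k t < (k + 1) ℓ + s ≤ deg y`, some neighbour extends `P`.
-/

open Finset

namespace SimpleGraph

variable {V S : Type*} {G : SimpleGraph V} {φ : Sym2 V → Finset S}

def IsStronglyProper (G : SimpleGraph V) (φ : Sym2 V → Finset S) : Prop :=
  ∀ e ∈ G.edgeSet, ∀ f ∈ G.edgeSet, e ≠ f → (∃ v : V, v ∈ e ∧ v ∈ f) →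
    Disjoint (φ e) (φ f)

def IsRainbowAvoiding (φ : Sym2 V → Finset S) (S₀ : Finset S) (l : List (Sym2 V)) : Prop :=
  l.Pairwise (fun e f => Disjoint (φ e) (φ f)) ∧ ∀ e ∈ l, Disjoint (φ e) S₀

theorem IsRainbowAvoiding.append_singleton [DecidableEq V] [DecidableEq S] {S₀ : Finset S}
    {l : List (Sym2 V)} (hl : IsRainbowAvoiding φ S₀ l) {e : Sym2 V}
    (he : Disjoint (φ e) (S₀ ∪ l.toFinset.biUnion φ)) :
    IsRainbowAvoiding φ S₀ (l ++ [e]) := by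
  rw [disjoint_union_right, disjoint_biUnion_right] at he
  refine ⟨List.pairwise_append.2 ⟨hl.1, List.pairwise_singleton _ _, ?_⟩, ?_⟩
  · rintro f hf g hg
    rw [List.mem_singleton.1 hg]
    exact (he.2 f (List.mem_toFinset.2 hf)).symm
  · rintro f hf
    rcases List.mem_append.1 hf with hf | hf
    · exact hl.2 f hf
    · rw [List.mem_singleton.1 hf]
      exact he.1

theorem IsStronglyProper.card_neighbors_not_disjoint_le [DecidableEq S]
    (hφ : G.IsStronglyProper φ) (y : V) [Fintype (G.neighborSet y)] (F : Finset S) :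
    #{z ∈ G.neighborFinset y | ¬Disjoint (φ s(y, z)) F} ≤ #F := by
  classical
  calc _ ≤ #(F.biUnion fun c => {z ∈ G.neighborFinset y | c ∈ φ s(y, z)}) := by
        refine card_le_card fun z hz => ?_
        obtain ⟨hz, hzF⟩ := mem_filter.1 hz
        obtain ⟨c, hcz, hcF⟩ := not_disjoint_iff.1 hzF
        exact mem_biUnion.2 ⟨c, hcF, mem_filter.2 ⟨hz, hcz⟩⟩
    _ ≤ #F * 1 := by
        refine card_biUnion_le_card_mul _ _ _ fun c _ => card_le_one.2 ?_
        intro z₁ hz₁ z₂ hz₂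
        simp only [mem_filter, mem_neighborFinset] at hz₁ hz₂
        by_contra hne
        -- the edges `yz₁` and `yz₂` share `y`, so they cannot both carry the colour `c`
        exact Finset.disjoint_left.1 (hφ _ hz₁.1 _ hz₂.1 (fun h => hne (Sym2.congr_right.1 h))
          ⟨y, Sym2.mem_mk_left _ _, Sym2.mem_mk_left _ _⟩) hz₁.2 hz₂.2
    _ = #F := mul_one _

theorem Walk.card_neighbors_mem_support_le [DecidableEq V] {x y : V} (P : G.Walk x y)
    [Fintype (G.neighborSet y)] :
    #{z ∈ G.neighborFinset y | z ∈ P.support} ≤ P.length := by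
  calc _ ≤ #(P.support.toFinset.erase y) := by
        refine card_le_card fun z hz => ?_
        obtain ⟨hz, hzP⟩ := mem_filter.1 hz
        exact mem_erase.2 ⟨(G.ne_of_adj ((G.mem_neighborFinset y z).1 hz)).symm,
          List.mem_toFinset.2 hzP⟩
    _ = #P.support.toFinset - 1 := card_erase_of_mem (List.mem_toFinset.2 P.end_mem_support)
    _ ≤ P.support.length - 1 := Nat.sub_le_sub_right (List.toFinset_card_le _) 1
    _ = P.length := by simp [Walk.length_support]

theorem Walk.card_biUnion_edges_le [DecidableEq V] [DecidableEq S] {k : ℕ}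
    (hcard : ∀ e ∈ G.edgeSet, #(φ e) ≤ k) {x y : V} (P : G.Walk x y) :
    #(P.edges.toFinset.biUnion φ) ≤ P.length * k :=
  calc _ ≤ #P.edges.toFinset * k := card_biUnion_le_card_mul _ _ _ fun e he =>
        hcard e (P.edges_subset_edgeSet (List.mem_toFinset.1 he))
    _ ≤ P.length * k := by
        gcongr
        exact (List.toFinset_card_le _).trans P.length_edges.le

theorem Walk.exists_adj_notMem_support_disjoint (hφ : G.IsStronglyProper φ) {x y : V}
    (P : G.Walk x y) [Fintype (G.neighborSet y)] (F : Finset S)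
    (h : P.length + #F < G.degree y) :
    ∃ z, G.Adj y z ∧ z ∉ P.support ∧ Disjoint (φ s(y, z)) F := by
  classical
  obtain ⟨z, hz, hbad⟩ := exists_mem_notMem_of_card_lt_card
    (s := {z ∈ G.neighborFinset y | z ∈ P.support} ∪
      {z ∈ G.neighborFinset y | ¬Disjoint (φ s(y, z)) F})
    (t := G.neighborFinset y) <| calc
      _ ≤ P.length + #F := (card_union_le _ _).trans
        (add_le_add P.card_neighbors_mem_support_le (hφ.card_neighbors_not_disjoint_le y F))
      _ < _ := by rwa [card_neighborFinset_eq_degree]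
  simp only [mem_union, mem_filter, hz, true_and, not_or, not_not] at hbad
  exact ⟨z, (G.mem_neighborFinset y z).1 hz, hbad⟩

theorem Walk.IsPath.exists_concat_isRainbowAvoiding [DecidableEq V] [DecidableEq S] {k : ℕ}
    (hcard : ∀ e ∈ G.edgeSet, #(φ e) ≤ k) (hφ : G.IsStronglyProper φ) {S₀ : Finset S}
    {x y : V} {P : G.Walk x y} (hP : P.IsPath) (hrain : IsRainbowAvoiding φ S₀ P.edges)
    [Fintype (G.neighborSet y)] (hdeg : (k + 1) * P.length + #S₀ < G.degree y) :
    ∃ z, ∃ h : G.Adj y z,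
      (P.concat h).IsPath ∧ IsRainbowAvoiding φ S₀ (P.concat h).edges := by
  obtain ⟨z, hyz, hzP, hz⟩ := P.exists_adj_notMem_support_disjoint hφ
    (S₀ ∪ P.edges.toFinset.biUnion φ) <| calc
      _ ≤ P.length + (#S₀ + P.length * k) :=
        add_le_add_right ((card_union_le _ _).trans
          (add_le_add_right (P.card_biUnion_edges_le hcard) _)) _
      _ = (k + 1) * P.length + #S₀ := by ring
      _ < _ := hdeg
  refine ⟨z, hyz, hP.concat hzP hyz, ?_⟩
  rw [Walk.edges_concat, List.concat_eq_append]
  exact hrain.append_singleton hz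

end SimpleGraph

theorem stmt_3_general {V : Type*} [Fintype V] {S : Type*}
    (k ℓ s : ℕ)
    (G : SimpleGraph V) [DecidableRel G.Adj]
    (hdeg : ∀ v : V, (k + 1) * ℓ + s ≤ G.degree v)
    (φ : Sym2 V → Finset S)
    (hcard : ∀ e ∈ G.edgeSet, (φ e).card = k)
    (hproper : ∀ e ∈ G.edgeSet, ∀ f ∈ G.edgeSet, e ≠ f →
      (∃ v : V, v ∈ e ∧ v ∈ f) → Disjoint (φ e) (φ f))
    (x : V) (S₀ : Finset S) (hS₀ : S₀.card ≤ s) :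
    ∃ (y : V) (P : G.Walk x y), P.IsPath ∧ P.length = ℓ ∧
      P.edges.Pairwise (fun e f => Disjoint (φ e) (φ f)) ∧
      ∀ e ∈ P.edges, Disjoint (φ e) S₀ := by
  classical
  suffices h : ∀ t ≤ ℓ, ∃ (y : V) (P : G.Walk x y),
      P.IsPath ∧ P.length = t ∧ SimpleGraph.IsRainbowAvoiding φ S₀ P.edges from h ℓ le_rfl
  intro t ht
  induction t with
  | zero => exact ⟨x, .nil, .nil, rfl, by simp [SimpleGraph.IsRainbowAvoiding]⟩
  | succ t ih =>
    obtain ⟨y, P, hP, rfl, hrain⟩ := ih (by omega)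
    obtain ⟨z, hyz, hP', hrain'⟩ := hP.exists_concat_isRainbowAvoiding
      (fun e he => (hcard e he).le) hproper hrain (by nlinarith [hdeg y])
    exact ⟨z, P.concat hyz, hP', by simp, hrain'⟩

/-- Given a graph of minimum degree at least `(k+1)ℓ + s` with a strongly proper
edge-coloring by `k`-subsets of `S`, a vertex `x` and a set `S₀ ⊆ S` of size at most `s`,
there is a strongly rainbow path of length `ℓ` from `x` avoiding all colors of `S₀`. -/
theorem stmt_3 {V : Type*} [Fintype V] {S : Type*} [DecidableEq S]
    (k ℓ s : ℕ) (hk : 2 ≤ k) (hℓ : 1 ≤ ℓ) (hs : 1 ≤ s)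
    (G : SimpleGraph V) [DecidableRel G.Adj]
    (hdeg : ∀ v : V, (k + 1) * ℓ + s ≤ G.degree v)
    (φ : Sym2 V → Finset S)
    (hcard : ∀ e ∈ G.edgeSet, (φ e).card = k)
    (hproper : ∀ e ∈ G.edgeSet, ∀ f ∈ G.edgeSet, e ≠ f →
      (∃ v : V, v ∈ e ∧ v ∈ f) → Disjoint (φ e) (φ f))
    (x : V) (S₀ : Finset S) (hS₀ : S₀.card ≤ s) :
    ∃ (y : V) (P : G.Walk x y), P.IsPath ∧ P.length = ℓ ∧
      P.edges.Pairwise (fun e f => Disjoint (φ e) (φ f)) ∧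
      ∀ e ∈ P.edges, Disjoint (φ e) S₀ :=
  stmt_3_general k ℓ s G hdeg φ hcard hproper x S₀ hS₀
end

section
/- Let $H$ be a hypergraph (edges of arbitrary size at least 2) and $\pi$ a total (linear) order on its vertex set. If $H$ contains no increasing linear path of length $\ell$ (with respect to $\pi$), then $V(H)$ can be partitioned into $\ell$ independent sets. -/
/-- `IsIncLinPath H ℓ e x` says `e 0, …, e (ℓ-1)` is an increasing linear path of length
`ℓ` in the hypergraph `H`, with `x i` the intersection vertex of `e i` and `e (i+1)`,
with respect to the linear order on the vertices. -/
def IsIncLinPath {V : Type*} [LinearOrder V] (H : Finset (Finset V)) (ℓ : ℕ)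
    (e : ℕ → Finset V) (x : ℕ → V) : Prop :=
  (∀ i < ℓ, e i ∈ H) ∧
  (∀ i, i + 1 < ℓ → e i ∩ e (i + 1) = {x i}) ∧
  (∀ i j, i < j → j < ℓ → j ≠ i + 1 → Disjoint (e i) (e j)) ∧
  (2 ≤ ℓ → ∀ v ∈ e 0, v ≠ x 0 → v < x 0) ∧
  (2 ≤ ℓ → ∀ v ∈ e (ℓ - 1), v ≠ x (ℓ - 2) → x (ℓ - 2) < v) ∧
  (∀ i, 1 ≤ i → i + 1 < ℓ → ∀ v ∈ e i, v ≠ x (i - 1) → v ≠ x i →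
    x (i - 1) < v ∧ v < x i)

/-!
Call a sequence of edges a chain if the least vertex of each edge is the greatest vertex of the
previous one, and colour each vertex `v` by the largest number of edges of a chain ending at `v`.
A chain is an increasing linear path, so without increasing paths of length `ℓ` the colours lie
in `{0, …, ℓ - 1}`. An edge `d` extends any chain ending at `min d` to a chain ending at
`max d`, so the two extreme vertices of `d` get different colours.
-/

section MinMaxChain

variable {V : Type*} [LinearOrder V] {H : Finset (Finset V)}

def IsMinMaxChain (H : Finset (Finset V)) (k : ℕ) (e : ℕ → Finset V) (a : ℕ → V) : Prop :=
  ∀ i < k, e i ∈ H ∧ a i < a (i + 1) ∧ IsLeast (e i : Set V) (a i) ∧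
    IsGreatest (e i : Set V) (a (i + 1))

namespace IsMinMaxChain

variable {k i : ℕ} {e : ℕ → Finset V} {a : ℕ → V} {w : V}

lemma left_le (h : IsMinMaxChain H k e a) (hi : i < k) (hw : w ∈ e i) : a i ≤ w :=
  (h i hi).2.2.1.2 hw

lemma le_right (h : IsMinMaxChain H k e a) (hi : i < k) (hw : w ∈ e i) : w ≤ a (i + 1) :=
  (h i hi).2.2.2.2 hw

lemma mono (h : IsMinMaxChain H k e a) {m : ℕ} (hm : m ≤ k) : IsMinMaxChain H m e a :=
  fun i hi => h i (hi.trans_le hm)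

lemma strictMonoOn (h : IsMinMaxChain H k e a) : StrictMonoOn a (Set.Iic k) :=
  strictMonoOn_Iic_of_lt_succ fun i hi => by simpa using (h i hi).2.1

lemma isIncLinPath (h : IsMinMaxChain H k e a) : IsIncLinPath H k e (fun i => a (i + 1)) := by
  refine ⟨fun i hi => (h i hi).1, fun i hi => ?_, fun i j hij hj hji => ?_, fun _ v hv hne => ?_,
    fun hk v hv hne => ?_, fun i hi hik v hv hne hne' => ?_⟩
  · ext w
    simp only [Finset.mem_inter, Finset.mem_singleton]
    refine ⟨fun ⟨hw, hw'⟩ => le_antisymm (h.le_right (by omega) hw) (h.left_le hi hw'),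
      fun hw => hw ▸ ⟨(h i (by omega)).2.2.2.1, (h (i + 1) hi).2.2.1.1⟩⟩
  · have hgap : a (i + 1) < a j :=
      h.strictMonoOn (Set.mem_Iic.mpr (by omega)) (Set.mem_Iic.mpr (by omega)) (by omega)
    exact Finset.disjoint_left.mpr fun w hwi hwj =>
      (hgap.trans_le (h.left_le hj hwj)).not_ge (h.le_right (hij.trans hj) hwi)
  · exact lt_of_le_of_ne (h.le_right (by omega) hv) hne
  · dsimp only at hne ⊢
    rw [show k - 2 + 1 = k - 1 by omega] at hne ⊢
    exact lt_of_le_of_ne (h.left_le (by omega) hv) hne.symm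
  · dsimp only at hne ⊢
    rw [show i - 1 + 1 = i by omega] at hne ⊢
    exact ⟨lt_of_le_of_ne (h.left_le (by omega) hv) hne.symm,
      lt_of_le_of_ne (h.le_right (by omega) hv) hne'⟩

lemma snoc (h : IsMinMaxChain H k e a) {d : Finset V} {w : V} (hd : d ∈ H)
    (hmin : IsLeast (d : Set V) (a k)) (hmax : IsGreatest (d : Set V) w) (hlt : a k < w) :
    IsMinMaxChain H (k + 1) (Function.update e k d) (Function.update a (k + 1) w) := by
  intro i hi
  rcases (Nat.lt_succ_iff.mp hi).lt_or_eq with hik | rfl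
  · simpa [Function.update_of_ne hik.ne, Function.update_of_ne (by omega : i ≠ k + 1),
      Function.update_of_ne (by omega : i + 1 ≠ k + 1)] using h i hik
  · simpa using ⟨hd, hlt, hmin, hmax⟩

end IsMinMaxChain

def chainLengths (H : Finset (Finset V)) (v : V) : Set ℕ :=
  {k | ∃ e a, IsMinMaxChain H k e a ∧ a k = v}

noncomputable def chainRank (H : Finset (Finset V)) (v : V) : ℕ :=
  sSup (chainLengths H v)

section Bounded

variable {ℓ : ℕ} (hbound : ∀ k e a, IsMinMaxChain H k e a → k < ℓ)
include hbound

lemma bddAbove_chainLengths (v : V) : BddAbove (chainLengths H v) :=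
  ⟨ℓ, fun _ ⟨e, a, h, _⟩ => (hbound _ e a h).le⟩

lemma chainRank_mem_chainLengths (v : V) : chainRank H v ∈ chainLengths H v :=
  Nat.sSup_mem ⟨0, fun _ => ∅, fun _ => v, fun _ hi => absurd hi (Nat.not_lt_zero _), rfl⟩
    (bddAbove_chainLengths hbound v)

lemma chainRank_lt (v : V) : chainRank H v < ℓ :=
  have ⟨e, a, h, _⟩ := chainRank_mem_chainLengths hbound v
  hbound _ e a h

lemma chainRank_lt_chainRank {d : Finset V} {u w : V} (hd : d ∈ H)
    (hu : IsLeast (d : Set V) u) (hw : IsGreatest (d : Set V) w) (huw : u < w) :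
    chainRank H u < chainRank H w := by
  obtain ⟨e, a, h, hau⟩ := chainRank_mem_chainLengths hbound u
  rw [← hau] at hu huw
  exact le_csSup (bddAbove_chainLengths hbound w)
    ⟨_, _, h.snoc hd hu hw huw, Function.update_self _ _ _⟩

end Bounded

end MinMaxChain

/-- If a hypergraph (with all edges of size at least 2) contains no increasing linear
path of length `ℓ` with respect to a total order on the vertices, then its vertex set can
be partitioned into `ℓ` independent sets. -/
theorem stmt_6 {V : Type*} [LinearOrder V] (H : Finset (Finset V))
    (hsize : ∀ e ∈ H, 2 ≤ e.card) (ℓ : ℕ)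
    (hnopath : ¬ ∃ (e : ℕ → Finset V) (x : ℕ → V), IsIncLinPath H ℓ e x) :
    ∃ f : V → Fin ℓ, ∀ e ∈ H, ∀ i : Fin ℓ, ∃ v ∈ e, f v ≠ i := by
  have hbound : ∀ k e a, IsMinMaxChain H k e a → k < ℓ := fun k e a h =>
    lt_of_not_ge fun hk => hnopath ⟨e, _, (h.mono hk).isIncLinPath⟩
  refine ⟨fun v => ⟨chainRank H v, chainRank_lt hbound v⟩, fun d hd i => ?_⟩
  have hne : d.Nonempty := Finset.card_pos.mp (by have := hsize d hd; omega)
  have hrank : chainRank H (d.min' hne) < chainRank H (d.max' hne) :=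
    chainRank_lt_chainRank hbound hd (d.isLeast_min' hne) (d.isGreatest_max' hne)
      (d.min'_lt_max'_of_card (hsize d hd))
  by_cases hi : chainRank H (d.min' hne) = i
  · exact ⟨d.max' hne, d.max'_mem hne, fun h => hrank.ne (hi.trans (congrArg Fin.val h).symm)⟩
  · exact ⟨d.min' hne, d.min'_mem hne, fun h => hi (congrArg Fin.val h)⟩
end

section
/- Let $H$ be an $r$-uniform leveled linear quasi-tree of height $h$ rooted at $w$, with main levels $L_0, \dots, L_h$. For $1 \leq i \leq h-1$ and distinct vertices $x, y \in L_i$, there exists an $x,y$-path $P$ in $H$ of even length at most $2i$ that is contained in the union of the first $i$ segments $H_0 \cup \cdots \cup H_{i-1}$ and intersects $L_i$ only in $x$ and $y$. -/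
/-!
Induction on `i`. The edges of `H_{i-1}` through `x` and `y` are distinct, since each edge
meets `L_i` only once. If they intersect they form a path of length 2. Otherwise they are
disjoint, so `i ≥ 2` (every edge of `H_0` contains the root), and their vertices `x', y'` in
`L_{i-1}` are joined by induction by a path in `H_0 ∪ ⋯ ∪ H_{i-2}`. That path meets
`H_{i-1}` only inside `L_{i-1}`, hence only in `x'` and `y'`, so adding the two edges at its
ends yields the required path.
-/

/-- An `r`-uniform leveled linear quasi-tree of height `h` rooted at `w`:
segments `seg 0, …, seg (h-1)`, main levels `L 0, …, L h` and companion levels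
`L' 0, …, L' (h-1)`.  Each segment `seg i` is the `r`-expansion of the bipartite graph
`B i = {e ∩ (L i ∪ L' i) : e ∈ seg i}`, every edge meeting `L i`, `L' i` and `L (i+1)`
in exactly one vertex, the whole graph is linear, consecutive segments meet exactly in
the next main level, non-consecutive segments are disjoint, and `L 0 = {w}`. -/
structure LeveledLinearQuasiTree (V : Type*) [DecidableEq V] (r h : ℕ) where
  w : V
  L : ℕ → Finset V
  L' : ℕ → Finset V
  seg : ℕ → Finset (Finset V)
  L_zero : L 0 = {w}
  edge_card : ∀ i < h, ∀ e ∈ seg i, e.card = r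
  linear : ∀ i < h, ∀ j < h, ∀ e ∈ seg i, ∀ f ∈ seg j, e ≠ f → (e ∩ f).card ≤ 1
  meets_main : ∀ i < h, ∀ e ∈ seg i, (e ∩ L i).card = 1
  meets_companion : ∀ i < h, ∀ e ∈ seg i, (e ∩ L' i).card = 1
  meets_next : ∀ i < h, ∀ e ∈ seg i, (e ∩ L (i + 1)).card = 1
  parts_disj₁ : ∀ i < h, Disjoint (L i) (L' i)
  parts_disj₂ : ∀ i < h, Disjoint (L i) (L (i + 1))
  parts_disj₃ : ∀ i < h, Disjoint (L' i) (L (i + 1))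
  expansion : ∀ i < h, ∀ e ∈ seg i, ∀ f ∈ seg i, e ≠ f → e ∩ f ⊆ L i ∪ L' i
  repr_mem : ∀ i < h, ∀ v ∈ L (i + 1), ∃ e ∈ seg i, v ∈ e
  repr_unique : ∀ i < h, ∀ e ∈ seg i, ∀ f ∈ seg i, e ≠ f →
    Disjoint (e ∩ L (i + 1)) (f ∩ L (i + 1))
  no_isolated_main : ∀ i < h, ∀ v ∈ L i, ∃ e ∈ seg i, v ∈ e
  no_isolated_companion : ∀ i < h, ∀ v ∈ L' i, ∃ e ∈ seg i, v ∈ e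
  inter_consec : ∀ i, i + 1 < h →
    (seg i).biUnion id ∩ (seg (i + 1)).biUnion id = L (i + 1)
  disj_far : ∀ i < h, ∀ j < h, i + 1 < j →
    Disjoint ((seg i).biUnion id) ((seg j).biUnion id)

open Finset

section LinearPath

variable {α V : Type*} [DecidableEq V]

structure IsLinearPath (e : ℕ → Finset V) (n : ℕ) (x y : V) : Prop where
  card_inter_succ : ∀ t, t + 1 < n → (e t ∩ e (t + 1)).card = 1
  disjoint_of_ne_succ : ∀ s t, s < t → t < n → t ≠ s + 1 → Disjoint (e s) (e t)
  start_mem : x ∈ e 0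
  end_mem : y ∈ e (n - 1)
  start_notMem : ∀ t, 0 < t → t < n → x ∉ e t
  end_notMem : ∀ t, t < n - 1 → y ∉ e t

def pathCons (f : α) (e : ℕ → α) : ℕ → α
  | 0 => f
  | t + 1 => e t

def pathSnoc (e : ℕ → α) (n : ℕ) (f : α) (t : ℕ) : α :=
  if t < n then e t else f

theorem forall_lt_pathCons {p : α → Prop} {f : α} {e : ℕ → α} {n : ℕ} :
    (∀ t < n + 1, p (pathCons f e t)) ↔ p f ∧ ∀ t < n, p (e t) :=
  Nat.forall_lt_succ_left

theorem forall_lt_pathSnoc {p : α → Prop} {e : ℕ → α} {n : ℕ} {f : α} :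
    (∀ t < n + 1, p (pathSnoc e n f t)) ↔ (∀ t < n, p (e t)) ∧ p f := by
  rw [Nat.forall_lt_succ_right]
  exact and_congr (forall₂_congr fun t ht => by simp [pathSnoc, ht]) (by simp [pathSnoc])

theorem isLinearPath_single {e : Finset V} {x y : V} (hx : x ∈ e) (hy : y ∈ e) :
    IsLinearPath (fun _ => e) 1 x y where
  card_inter_succ _ _ := by omega
  disjoint_of_ne_succ _ _ _ _ _ := by omega
  start_mem := hx
  end_mem := hy
  start_notMem _ _ _ := by omega
  end_notMem _ _ := by omega

theorem IsLinearPath.cons {e : ℕ → Finset V} {n : ℕ} {x' x y : V}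
    (hP : IsLinearPath e n x' y) (hn : 1 ≤ n) {f : Finset V} (hx : x ∈ f)
    (hf : (f ∩ e 0).card = 1) (hdisj : ∀ t, 1 ≤ t → t < n → Disjoint f (e t))
    (hxe : ∀ t < n, x ∉ e t) (hyf : y ∉ f) :
    IsLinearPath (pathCons f e) (n + 1) x y where
  card_inter_succ
    | 0, _ => hf
    | t + 1, ht => hP.card_inter_succ t (by omega)
  disjoint_of_ne_succ
    | 0, t + 1, _, ht, hne => hdisj t (by omega) (by omega)
    | s + 1, t + 1, hst, ht, hne => hP.disjoint_of_ne_succ s t (by omega) (by omega) (by omega)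
  start_mem := hx
  end_mem := by
    obtain ⟨m, rfl⟩ : ∃ m, n = m + 1 := ⟨n - 1, by omega⟩
    exact hP.end_mem
  start_notMem
    | t + 1, _, ht => hxe t (by omega)
  end_notMem
    | 0, _ => hyf
    | t + 1, ht => hP.end_notMem t (by omega)

theorem IsLinearPath.snoc {e : ℕ → Finset V} {n : ℕ} {x y' y : V}
    (hP : IsLinearPath e n x y') (hn : 1 ≤ n) {f : Finset V} (hy : y ∈ f)
    (hf : (e (n - 1) ∩ f).card = 1) (hdisj : ∀ t < n - 1, Disjoint (e t) f)
    (hye : ∀ t < n, y ∉ e t) (hxf : x ∉ f) :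
    IsLinearPath (pathSnoc e n f) (n + 1) x y := by
  have hlt : ∀ t < n, pathSnoc e n f t = e t := fun t ht => if_pos ht
  have hn' : pathSnoc e n f n = f := if_neg (lt_irrefl n)
  refine ⟨fun t ht => ?_, fun s t hst ht hne => ?_, ?_, ?_, fun t h0 ht => ?_, fun t ht => ?_⟩
  · rw [hlt t (by omega)]
    rcases (by omega : t + 1 < n ∨ t + 1 = n) with ht' | ht'
    · rw [hlt _ ht']
      exact hP.card_inter_succ t ht'
    · obtain rfl : t = n - 1 := by omega
      rwa [Nat.sub_add_cancel hn, hn']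
  · rw [hlt s (by omega)]
    rcases (by omega : t < n ∨ t = n) with ht' | rfl
    · rw [hlt t ht']
      exact hP.disjoint_of_ne_succ s t hst ht' hne
    · rw [hn']
      exact hdisj s (by omega)
  · rw [hlt 0 hn]
    exact hP.start_mem
  · rw [Nat.add_sub_cancel, hn']
    exact hy
  · rcases (by omega : t < n ∨ t = n) with ht' | rfl
    · rw [hlt t ht']
      exact hP.start_notMem t h0 ht'
    · rw [hn']
      exact hxf
  · rw [hlt t (by omega)]
    exact hye t (by omega)

end LinearPath

namespace LeveledLinearQuasiTree

variable {V : Type*} [DecidableEq V] {r h : ℕ} (T : LeveledLinearQuasiTree V r h)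

structure IsLevelPath (i : ℕ) (e : ℕ → Finset V) (n : ℕ) (x y : V) : Prop
    extends IsLinearPath e n x y where
  mem_seg : ∀ t < n, ∃ j < i, e t ∈ T.seg j
  inter_level_subset : ∀ t < n, e t ∩ T.L i ⊆ {x, y}

variable {T}

theorem eq_of_mem_edge_of_mem_next {j : ℕ} (hj : j < h) {e : Finset V} (he : e ∈ T.seg j)
    {u v : V} (hu : u ∈ e) (hu' : u ∈ T.L (j + 1)) (hv : v ∈ e) (hv' : v ∈ T.L (j + 1)) :
    u = v :=
  card_le_one.mp (T.meets_next j hj e he).le u (mem_inter.2 ⟨hu, hu'⟩) v (mem_inter.2 ⟨hv, hv'⟩)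

theorem exists_mem_edge_mem_main {j : ℕ} (hj : j < h) {e : Finset V} (he : e ∈ T.seg j) :
    ∃ v ∈ e, v ∈ T.L j := by
  obtain ⟨v, hv⟩ := card_pos.mp (by rw [T.meets_main j hj e he]; exact one_pos)
  exact ⟨v, (mem_inter.mp hv).1, (mem_inter.mp hv).2⟩

theorem root_mem_of_mem_seg_zero (hh : 0 < h) {e : Finset V} (he : e ∈ T.seg 0) : T.w ∈ e := by
  obtain ⟨v, hve, hv⟩ := exists_mem_edge_mem_main hh he
  rw [T.L_zero, mem_singleton] at hv
  exact hv ▸ hve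

theorem card_inter_eq_one {j j' : ℕ} (hj : j < h) (hj' : j' < h) {e f : Finset V}
    (he : e ∈ T.seg j) (hf : f ∈ T.seg j') (hne : e ≠ f) {v : V} (hve : v ∈ e) (hvf : v ∈ f) :
    (e ∩ f).card = 1 :=
  le_antisymm (T.linear j hj j' hj' e he f hf hne) (card_pos.mpr ⟨v, mem_inter.2 ⟨hve, hvf⟩⟩)

theorem mem_main_of_mem_seg_lt {js j : ℕ} (hjs : js < j) (hj : j < h) {e f : Finset V}
    (he : e ∈ T.seg js) (hf : f ∈ T.seg j) {v : V} (hve : v ∈ e) (hvf : v ∈ f) : v ∈ T.L j := by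
  have hv : v ∈ (T.seg js).biUnion id ∩ (T.seg j).biUnion id :=
    mem_inter.2 ⟨mem_biUnion.2 ⟨e, he, hve⟩, mem_biUnion.2 ⟨f, hf, hvf⟩⟩
  rcases (by omega : js + 1 < j ∨ js + 1 = j) with hfar | rfl
  · exact absurd hv (disjoint_iff_inter_eq_empty.mp (T.disj_far js (by omega) _ hj hfar) ▸
      notMem_empty v)
  · rwa [T.inter_consec js hj] at hv

theorem ne_of_mem_seg_lt {js j : ℕ} (hjs : js < j) (hj : j < h) {e f : Finset V}
    (he : e ∈ T.seg js) (hf : f ∈ T.seg j) : e ≠ f := by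
  rintro rfl
  obtain ⟨v, hv⟩ := card_pos.mp (by rw [T.meets_companion j hj e hf]; exact one_pos)
  obtain ⟨hve, hv'⟩ := mem_inter.mp hv
  exact disjoint_left.mp (T.parts_disj₁ j hj) (mem_main_of_mem_seg_lt hjs hj he hf hve hve) hv'

theorem notMem_of_mem_next_of_mem_seg_lt {js j : ℕ} (hjs : js < j) (hj : j < h)
    {e : Finset V} (he : e ∈ T.seg js) {v : V} (hv : v ∈ T.L (j + 1)) : v ∉ e := fun hve => by
  obtain ⟨f, hf, hvf⟩ := T.repr_mem j hj v hv
  exact disjoint_left.mp (T.parts_disj₂ j hj) (mem_main_of_mem_seg_lt hjs hj he hf hve hvf) hv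

theorem inter_next_subset {j : ℕ} (hj : j < h) {e : Finset V} (he : e ∈ T.seg j) {x : V}
    (hxe : x ∈ e) (hx : x ∈ T.L (j + 1)) : e ∩ T.L (j + 1) ⊆ {x} := fun _ hv =>
  mem_singleton.2 (eq_of_mem_edge_of_mem_next hj he (mem_inter.1 hv).1 (mem_inter.1 hv).2 hxe hx)

theorem isLevelPath_pair {j : ℕ} (hj : j < h) {ex ey : Finset V} (hex : ex ∈ T.seg j)
    (hey : ey ∈ T.seg j) {x y : V} (hxex : x ∈ ex) (hx : x ∈ T.L (j + 1)) (hyey : y ∈ ey)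
    (hy : y ∈ T.L (j + 1)) (hxy : x ≠ y) {v : V} (hvex : v ∈ ex) (hvey : v ∈ ey) :
    T.IsLevelPath (j + 1) (pathSnoc (fun _ => ex) 1 ey) 2 x y := by
  have hyex : y ∉ ex := fun h => hxy (eq_of_mem_edge_of_mem_next hj hex hxex hx h hy)
  have hxey : x ∉ ey := fun h => hxy (eq_of_mem_edge_of_mem_next hj hey h hx hyey hy)
  have hne : ex ≠ ey := fun h => hyex (h ▸ hyey)
  refine ⟨(isLinearPath_single hxex hxex).snoc le_rfl hyey
    (card_inter_eq_one hj hj hex hey hne hvex hvey) (fun _ _ => by omega)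
    (fun _ _ => hyex) hxey, ?_, ?_⟩
  · exact (forall_lt_pathSnoc (p := fun f => ∃ j' < j + 1, f ∈ T.seg j')).2
      ⟨fun _ _ => ⟨j, by omega, hex⟩, ⟨j, by omega, hey⟩⟩
  · refine (forall_lt_pathSnoc (p := fun f => f ∩ T.L (j + 1) ⊆ {x, y})).2 ⟨fun _ _ => ?_, ?_⟩
    · exact (inter_next_subset hj hex hxex hx).trans (by simp)
    · exact (inter_next_subset hj hey hyey hy).trans (by simp)

theorem IsLevelPath.eq_or_eq_of_mem_seg {j n : ℕ} {P : ℕ → Finset V} {x' y' : V}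
    (hP : T.IsLevelPath j P n x' y') (hj : j < h) {t : ℕ} (ht : t < n) {f : Finset V}
    (hf : f ∈ T.seg j) {v : V} (hvf : v ∈ f) (hvP : v ∈ P t) : v = x' ∨ v = y' := by
  obtain ⟨js, hjs, hPt⟩ := hP.mem_seg t ht
  simpa using hP.inter_level_subset t ht
    (mem_inter.2 ⟨hvP, mem_main_of_mem_seg_lt hjs hj hPt hf hvP hvf⟩)

theorem IsLevelPath.notMem_of_mem_next {j n : ℕ} {P : ℕ → Finset V} {x' y' : V}
    (hP : T.IsLevelPath j P n x' y') (hj : j < h) {t : ℕ} (ht : t < n) {v : V}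
    (hv : v ∈ T.L (j + 1)) : v ∉ P t := by
  obtain ⟨js, hjs, hPt⟩ := hP.mem_seg t ht
  exact notMem_of_mem_next_of_mem_seg_lt hjs hj hPt hv

theorem IsLevelPath.extend {j : ℕ} (hj : j < h) {n : ℕ} (hn : 1 ≤ n) {P : ℕ → Finset V}
    {x' y' : V} (hP : T.IsLevelPath j P n x' y') {ex ey : Finset V} (hex : ex ∈ T.seg j)
    (hey : ey ∈ T.seg j) (hdisj : Disjoint ex ey) (hx'ex : x' ∈ ex) (hy'ey : y' ∈ ey) {x y : V}
    (hxex : x ∈ ex) (hx : x ∈ T.L (j + 1)) (hyey : y ∈ ey) (hy : y ∈ T.L (j + 1)) :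
    T.IsLevelPath (j + 1) (pathSnoc (pathCons ex P) (n + 1) ey) (n + 2) x y := by
  obtain ⟨m, rfl⟩ : ∃ m, n = m + 1 := ⟨n - 1, by omega⟩
  have hyex : y ∉ ex := fun h => disjoint_left.1 hdisj h hyey
  have hxey : x ∉ ey := fun h => disjoint_left.1 hdisj hxex h
  obtain ⟨j₀, hj₀, hP₀⟩ := hP.mem_seg 0 (by omega)
  obtain ⟨jₘ, hjₘ, hPₘ⟩ := hP.mem_seg m (by omega)
  have hcons : IsLinearPath (pathCons ex P) (m + 1 + 1) x y' := by
    refine hP.cons (by omega) hxex ?_ (fun t h1 ht => disjoint_left.2 fun v hvex hvP => ?_)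
      (fun _ ht => hP.notMem_of_mem_next hj ht hx) (fun h => disjoint_left.1 hdisj h hy'ey)
    · exact card_inter_eq_one hj (by omega) hex hP₀ (ne_of_mem_seg_lt hj₀ hj hP₀ hex).symm
        hx'ex hP.start_mem
    · rcases hP.eq_or_eq_of_mem_seg hj ht hex hvex hvP with rfl | rfl
      · exact hP.start_notMem t h1 ht hvP
      · exact disjoint_left.1 hdisj hvex hy'ey
  refine ⟨hcons.snoc (by omega) hyey ?_ ?_ ?_ hxey, ?_, ?_⟩
  · exact card_inter_eq_one (by omega) hj hPₘ hey (ne_of_mem_seg_lt hjₘ hj hPₘ hey)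
      hP.end_mem hy'ey
  · rintro (_ | t) ht
    · exact hdisj
    · refine disjoint_left.2 fun v hvP hvey => ?_
      rcases hP.eq_or_eq_of_mem_seg hj (by omega) hey hvey hvP with rfl | rfl
      · exact disjoint_left.1 hdisj hx'ex hvey
      · exact hP.end_notMem t (by omega) hvP
  · rintro (_ | t) ht
    · exact hyex
    · exact hP.notMem_of_mem_next hj (by omega) hy
  · refine (forall_lt_pathSnoc (p := fun f => ∃ j' < j + 1, f ∈ T.seg j')).2
      ⟨(forall_lt_pathCons (p := fun f => ∃ j' < j + 1, f ∈ T.seg j')).2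
        ⟨⟨j, by omega, hex⟩, fun t ht => ?_⟩, ⟨j, by omega, hey⟩⟩
    obtain ⟨js, hjs, hPt⟩ := hP.mem_seg t ht
    exact ⟨js, by omega, hPt⟩
  · refine (forall_lt_pathSnoc (p := fun f => f ∩ T.L (j + 1) ⊆ {x, y})).2
      ⟨(forall_lt_pathCons (p := fun f => f ∩ T.L (j + 1) ⊆ {x, y})).2
        ⟨?_, fun t ht v hv => ?_⟩, ?_⟩
    · exact (inter_next_subset hj hex hxex hx).trans (by simp)
    · exact absurd (mem_inter.1 hv).1 (hP.notMem_of_mem_next hj ht (mem_inter.1 hv).2)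
    · exact (inter_next_subset hj hey hyey hy).trans (by simp)

theorem exists_isLevelPath {i : ℕ} (hi1 : 1 ≤ i) (hih : i ≤ h) {x y : V} (hx : x ∈ T.L i)
    (hy : y ∈ T.L i) (hxy : x ≠ y) : ∃ k, 1 ≤ k ∧ k ≤ i ∧ ∃ e, T.IsLevelPath i e (2 * k) x y := by
  induction i using Nat.strong_induction_on generalizing x y with
  | _ i IH =>
  obtain ⟨j, rfl⟩ : ∃ j, i = j + 1 := ⟨i - 1, by omega⟩
  have hj : j < h := by omega
  obtain ⟨ex, hex, hxex⟩ := T.repr_mem j hj x hx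
  obtain ⟨ey, hey, hyey⟩ := T.repr_mem j hj y hy
  by_cases hmeet : (ex ∩ ey).Nonempty
  · obtain ⟨v, hv⟩ := hmeet
    exact ⟨1, le_rfl, by omega, _,
      isLevelPath_pair hj hex hey hxex hx hyey hy hxy (mem_inter.1 hv).1 (mem_inter.1 hv).2⟩
  have hdisj : Disjoint ex ey := disjoint_iff_inter_eq_empty.2 (not_nonempty_iff_eq_empty.1 hmeet)
  have hj1 : 1 ≤ j := Nat.one_le_iff_ne_zero.2 fun hj0 => by
    subst hj0
    exact disjoint_left.1 hdisj (root_mem_of_mem_seg_zero hj hex) (root_mem_of_mem_seg_zero hj hey)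
  obtain ⟨x', hx'ex, hx'⟩ := exists_mem_edge_mem_main hj hex
  obtain ⟨y', hy'ey, hy'⟩ := exists_mem_edge_mem_main hj hey
  have hx'y' : x' ≠ y' := by
    rintro rfl
    exact disjoint_left.1 hdisj hx'ex hy'ey
  obtain ⟨k, hk1, hkj, P, hP⟩ := IH j (by omega) hj1 hj.le hx' hy' hx'y'
  refine ⟨k + 1, by omega, by omega, pathSnoc (pathCons ex P) (2 * k + 1) ey, ?_⟩
  rw [mul_add, mul_one]
  exact hP.extend hj (by omega) hex hey hdisj hx'ex hy'ey hxex hx hyey hy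

end LeveledLinearQuasiTree

theorem stmt_13_general {V : Type*} [DecidableEq V] (r h : ℕ)
    (T : LeveledLinearQuasiTree V r h) (i : ℕ) (hi1 : 1 ≤ i) (hi2 : i ≤ h - 1)
    (x y : V) (hx : x ∈ T.L i) (hy : y ∈ T.L i) (hxy : x ≠ y) :
    ∃ (k : ℕ) (e : ℕ → Finset V), 1 ≤ k ∧ k ≤ i ∧
      (∀ t < 2 * k, ∃ j < i, e t ∈ T.seg j) ∧
      (∀ t, t + 1 < 2 * k → (e t ∩ e (t + 1)).card = 1) ∧
      (∀ s t, s < t → t < 2 * k → t ≠ s + 1 → Disjoint (e s) (e t)) ∧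
      x ∈ e 0 ∧ y ∈ e (2 * k - 1) ∧
      (∀ t, 0 < t → t < 2 * k → x ∉ e t) ∧
      (∀ t, t < 2 * k - 1 → y ∉ e t) ∧
      (∀ t < 2 * k, e t ∩ T.L i ⊆ {x, y}) := by
  obtain ⟨k, hk1, hki, e, hP⟩ := T.exists_isLevelPath hi1 (by omega) hx hy hxy
  exact ⟨k, e, hk1, hki, hP.mem_seg, hP.card_inter_succ, hP.disjoint_of_ne_succ, hP.start_mem,
    hP.end_mem, hP.start_notMem, hP.end_notMem, hP.inter_level_subset⟩

/-- In a leveled linear quasi-tree, any two distinct vertices `x, y` of the main level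
`L i` (`1 ≤ i ≤ h-1`) are joined by a linear path of even length at most `2i`, contained
in the first `i` segments, and meeting `L i` only in `x` and `y`. -/
theorem stmt_13 {V : Type*} [DecidableEq V] (r h : ℕ) (hr : 3 ≤ r)
    (T : LeveledLinearQuasiTree V r h) (i : ℕ) (hi1 : 1 ≤ i) (hi2 : i ≤ h - 1)
    (x y : V) (hx : x ∈ T.L i) (hy : y ∈ T.L i) (hxy : x ≠ y) :
    ∃ (k : ℕ) (e : ℕ → Finset V), 1 ≤ k ∧ k ≤ i ∧
      (∀ t < 2 * k, ∃ j < i, e t ∈ T.seg j) ∧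
      (∀ t, t + 1 < 2 * k → (e t ∩ e (t + 1)).card = 1) ∧
      (∀ s t, s < t → t < 2 * k → t ≠ s + 1 → Disjoint (e s) (e t)) ∧
      x ∈ e 0 ∧ y ∈ e (2 * k - 1) ∧
      (∀ t, 0 < t → t < 2 * k → x ∉ e t) ∧
      (∀ t, t < 2 * k - 1 → y ∉ e t) ∧
      (∀ t < 2 * k, e t ∩ T.L i ⊆ {x, y}) :=
  stmt_13_general r h T i hi1 hi2 x y hx hy hxy
end

section
/- Let $H$ be an $r$-uniform leveled linear quasi-tree of height $h$ rooted at $w$, and let $S \subseteq L_h$ (the last main level) with $|S| \geq (hpr)^h$ for positive integers $p, r$ with $r \geq 3$. Then there exists a vertex $x \in V(H)$ such that $|V(H_x) \cap S| \geq \frac{|S|}{(hpr)^{h-1}}$ and the down graph $H_x$ contains a spider centered at $x$ with $p$ legs, each leg being a monotone path from $x$ to a vertex of $V(H_x) \cap S$. -/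
/-- `IsMonotonePath T i x f y` : `f i, f (i+1), …, f (h-1)` is a monotone path in the
leveled linear quasi-tree `T` from the vertex `x ∈ L i ∪ L' i` down to the vertex
`y ∈ L h`, using one edge from each segment `i, i+1, …, h-1`, with consecutive edges
meeting in a single vertex of the intermediate main level, non-consecutive edges
disjoint, and `x` appearing only in the first edge.  Such a path hits every main level
at most once. -/
def IsMonotonePath {V : Type*} [DecidableEq V] {r h : ℕ}
    (T : LeveledLinearQuasiTree V r h) (i : ℕ) (x : V) (f : ℕ → Finset V) (y : V) :
    Prop :=
  (∀ t, i ≤ t → t < h → f t ∈ T.seg t) ∧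
  x ∈ f i ∧ y ∈ f (h - 1) ∧ y ∈ T.L h ∧
  (∀ t, i ≤ t → t + 1 < h →
    (f t ∩ f (t + 1)).card = 1 ∧ f t ∩ f (t + 1) ⊆ T.L (t + 1)) ∧
  (∀ s t, i ≤ s → s + 1 < t → t < h → Disjoint (f s) (f t)) ∧
  (∀ t, i < t → t < h → x ∉ f t)

/-!
Every `y ∈ L h` has a canonical monotone path from the root, and `through S j z` collects the
`y ∈ S` whose path uses `z` on level `j`. Let `c = hpr` and take the last level `i` with a vertex
`x` through which at least `|S| / c ^ i` of these paths pass (the root qualifies on level `0`).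
Every vertex below level `i` then carries at most `|S| / c ^ (i + 1)` of them, so a path through
`x` shares a vertex below `x` with at most `2h |S| / c ^ (i + 1) + 1` others. Since `c ≥ 3hp`,
`p` pairwise separated paths through `x` can be picked greedily, and linearity together with
the expansion structure of the segments forces such paths to meet only in `x`.
-/

lemma exists_pairwise_of_card_conflicts_le {α : Type*} [DecidableEq α] {R : α → α → Prop}
    (hR : ∀ a b, R a b → R b a) {s : Finset α} (conflicts : α → Finset α) {d : ℕ}
    (hconf : ∀ y ∈ s, ∀ z ∈ s, ¬ R y z → y ∈ conflicts z)
    (hcard : ∀ z ∈ s, (conflicts z).card ≤ d) :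
    ∀ {p : ℕ}, (p - 1) * d < s.card →
      ∃ g : Fin p → α, (∀ a, g a ∈ s) ∧ Pairwise fun a b => R (g a) (g b)
  | 0, _ => ⟨Fin.elim0, fun a => a.elim0, fun a => a.elim0⟩
  | p + 1, hs => by
    obtain ⟨g, hgs, hgR⟩ := exists_pairwise_of_card_conflicts_le hR conflicts hconf hcard
      (p := p) ((Nat.mul_le_mul_right _ (Nat.sub_le p 1)).trans_lt hs)
    have hlt : (Finset.univ.biUnion (conflicts ∘ g)).card < s.card :=
      (Finset.card_biUnion_le_card_mul _ _ d fun a _ => hcard _ (hgs a)).trans_lt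
        (by simpa using hs)
    obtain ⟨y, hys, hy⟩ := Finset.exists_mem_notMem_of_card_lt_card hlt
    have hyg : ∀ a, R y (g a) := fun a => by_contra fun hya =>
      hy (Finset.mem_biUnion.2 ⟨a, Finset.mem_univ _, hconf y hys _ (hgs a) hya⟩)
    refine ⟨Fin.cons y g, Fin.cases hys hgs, fun a b hab => ?_⟩
    cases a using Fin.cases <;> cases b using Fin.cases
    · exact absurd rfl hab
    · exact hyg _
    · exact hR _ _ (hyg _)
    · exact hgR (fun h' => hab (congrArg Fin.succ h'))

lemma sub_one_mul_lt_of_pow_le {c h p i N m B : ℕ} (hc : 3 * h * p ≤ c) (hp : 1 ≤ p)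
    (hi : i < h) (hN : c ^ h ≤ N) (hm : N ≤ c ^ i * m) (hB : B * c ^ (i + 1) ≤ N) :
    (p - 1) * (2 * h * B + 1) < m := by
  have hc1 : 1 ≤ c := le_trans (by nlinarith) hc
  have hC : c ^ (i + 1) ≤ N := (Nat.pow_le_pow_right hc1 hi).trans hN
  have hN0 : 0 < N := lt_of_lt_of_le (pow_pos hc1 h) hN
  refine Nat.lt_of_mul_lt_mul_right (a := c ^ (i + 1)) ?_
  calc (p - 1) * (2 * h * B + 1) * c ^ (i + 1)
        = (p - 1) * (2 * h * (B * c ^ (i + 1)) + c ^ (i + 1)) := by ring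
    _ ≤ (p - 1) * (2 * h * N + h * N) := by gcongr; nlinarith
    _ = (p - 1) * (3 * h * N) := by ring
    _ < p * (3 * h * N) := Nat.mul_lt_mul_of_pos_right (by omega) (by nlinarith)
    _ = 3 * h * p * N := by ring
    _ ≤ c * (c ^ i * m) := Nat.mul_le_mul hc hm
    _ = m * c ^ (i + 1) := by ring

namespace LeveledLinearQuasiTree

variable {V : Type*} [DecidableEq V] {r h : ℕ} (T : LeveledLinearQuasiTree V r h)

/-- Junk value `T.w` when `s` is empty. -/
noncomputable def pick (s : Finset V) : V :=
  if hs : s.Nonempty then hs.choose else T.w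

lemma pick_mem {s : Finset V} (hs : s.Nonempty) : T.pick s ∈ s := by
  rw [pick, dif_pos hs]
  exact hs.choose_spec

noncomputable def parentEdge (t : ℕ) (v : V) : Finset V :=
  if hv : ∃ e ∈ T.seg t, v ∈ e then hv.choose else ∅

lemma parentEdge_spec {t : ℕ} {v : V} (ht : t < h) (hv : v ∈ T.L (t + 1)) :
    T.parentEdge t v ∈ T.seg t ∧ v ∈ T.parentEdge t v := by
  have hex : ∃ e ∈ T.seg t, v ∈ e := T.repr_mem t ht v hv
  rw [parentEdge, dif_pos hex]
  exact hex.choose_spec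

/-- For `y ∈ L h` and `t ≤ h`, the vertex on level `t` of the monotone path from the root
to `y`. -/
noncomputable def ancestor (t : ℕ) (y : V) : V :=
  if t < h then T.pick (T.parentEdge t (ancestor (t + 1) y) ∩ T.L t) else y
termination_by h - t

noncomputable def pathEdge (t : ℕ) (y : V) : Finset V :=
  T.parentEdge t (T.ancestor (t + 1) y)

noncomputable def companion (t : ℕ) (y : V) : V :=
  T.pick (T.pathEdge t y ∩ T.L' t)

lemma ancestor_of_lt {t : ℕ} (ht : t < h) (y : V) :
    T.ancestor t y = T.pick (T.pathEdge t y ∩ T.L t) := by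
  rw [ancestor, if_pos ht, pathEdge]

lemma ancestor_height (y : V) : T.ancestor h y = y := by
  rw [ancestor, if_neg (lt_irrefl h)]

section path

variable {T} {y : V} {t : ℕ}

lemma pick_mem_of_card_eq_one {s : Finset V} (hs : s.card = 1) : T.pick s ∈ s :=
  T.pick_mem (Finset.card_pos.1 (by omega))

lemma ancestor_mem_L (hy : y ∈ T.L h) (ht : t ≤ h) : T.ancestor t y ∈ T.L t := by
  induction ht using Nat.decreasingInduction with
  | self => rwa [ancestor_height]
  | of_succ t ht ih =>
    have he := (T.parentEdge_spec ht ih).1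
    rw [ancestor_of_lt T ht]
    exact (Finset.mem_inter.1 (pick_mem_of_card_eq_one (T.meets_main t ht _ he))).2

lemma pathEdge_mem_seg (hy : y ∈ T.L h) (ht : t < h) : T.pathEdge t y ∈ T.seg t :=
  (T.parentEdge_spec ht (ancestor_mem_L hy ht)).1

lemma ancestor_succ_mem_pathEdge (hy : y ∈ T.L h) (ht : t < h) :
    T.ancestor (t + 1) y ∈ T.pathEdge t y :=
  (T.parentEdge_spec ht (ancestor_mem_L hy ht)).2

lemma ancestor_mem_pathEdge (hy : y ∈ T.L h) (ht : t < h) :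
    T.ancestor t y ∈ T.pathEdge t y := by
  rw [ancestor_of_lt T ht]
  exact (Finset.mem_inter.1
    (pick_mem_of_card_eq_one (T.meets_main t ht _ (pathEdge_mem_seg hy ht)))).1

lemma companion_mem_inter (hy : y ∈ T.L h) (ht : t < h) :
    T.companion t y ∈ T.pathEdge t y ∩ T.L' t :=
  pick_mem_of_card_eq_one (T.meets_companion t ht _ (pathEdge_mem_seg hy ht))

lemma companion_mem_L' (hy : y ∈ T.L h) (ht : t < h) : T.companion t y ∈ T.L' t :=
  (Finset.mem_inter.1 (companion_mem_inter hy ht)).2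

lemma eq_ancestor_of_mem_pathEdge {z : V} (hy : y ∈ T.L h) (ht : t < h)
    (hz : z ∈ T.pathEdge t y) (hzL : z ∈ T.L t) : z = T.ancestor t y :=
  Finset.card_le_one.1 (T.meets_main t ht _ (pathEdge_mem_seg hy ht)).le _
    (Finset.mem_inter.2 ⟨hz, hzL⟩) _
    (Finset.mem_inter.2 ⟨ancestor_mem_pathEdge hy ht, ancestor_mem_L hy ht.le⟩)

lemma eq_ancestor_succ_of_mem_pathEdge {z : V} (hy : y ∈ T.L h) (ht : t < h)
    (hz : z ∈ T.pathEdge t y) (hzL : z ∈ T.L (t + 1)) : z = T.ancestor (t + 1) y :=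
  Finset.card_le_one.1 (T.meets_next t ht _ (pathEdge_mem_seg hy ht)).le _
    (Finset.mem_inter.2 ⟨hz, hzL⟩) _
    (Finset.mem_inter.2 ⟨ancestor_succ_mem_pathEdge hy ht, ancestor_mem_L hy ht⟩)

lemma eq_companion_of_mem_pathEdge {z : V} (hy : y ∈ T.L h) (ht : t < h)
    (hz : z ∈ T.pathEdge t y) (hzL : z ∈ T.L' t) : z = T.companion t y :=
  Finset.card_le_one.1 (T.meets_companion t ht _ (pathEdge_mem_seg hy ht)).le _
    (Finset.mem_inter.2 ⟨hz, hzL⟩) _ (companion_mem_inter hy ht)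

lemma mem_biUnion_seg_of_mem_pathEdge {z : V} (hy : y ∈ T.L h) (ht : t < h)
    (hz : z ∈ T.pathEdge t y) : z ∈ (T.seg t).biUnion id :=
  Finset.mem_biUnion.2 ⟨_, pathEdge_mem_seg hy ht, hz⟩

lemma pathEdge_inter_pathEdge_succ_subset {y' : V} (hy : y ∈ T.L h) (hy' : y' ∈ T.L h)
    (ht : t + 1 < h) : T.pathEdge t y ∩ T.pathEdge (t + 1) y' ⊆ T.L (t + 1) := by
  intro z hz
  rw [← T.inter_consec t ht]
  obtain ⟨hz₁, hz₂⟩ := Finset.mem_inter.1 hz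
  exact Finset.mem_inter.2 ⟨mem_biUnion_seg_of_mem_pathEdge hy (by omega) hz₁,
    mem_biUnion_seg_of_mem_pathEdge hy' ht hz₂⟩

lemma disjoint_pathEdge {s : ℕ} {y' : V} (hy : y ∈ T.L h) (hy' : y' ∈ T.L h)
    (hst : s + 1 < t) (ht : t < h) : Disjoint (T.pathEdge s y) (T.pathEdge t y') :=
  Finset.disjoint_left.2 fun _ hz hz' =>
    Finset.disjoint_left.1 (T.disj_far s (by omega) t ht hst)
      (mem_biUnion_seg_of_mem_pathEdge hy (by omega) hz)
      (mem_biUnion_seg_of_mem_pathEdge hy' ht hz')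

lemma pathEdge_inter_pathEdge_succ (hy : y ∈ T.L h) (ht : t + 1 < h) :
    T.pathEdge t y ∩ T.pathEdge (t + 1) y = {T.ancestor (t + 1) y} := by
  refine Finset.eq_singleton_iff_unique_mem.2 ⟨Finset.mem_inter.2
    ⟨ancestor_succ_mem_pathEdge hy (by omega), ancestor_mem_pathEdge hy ht⟩, fun z hz => ?_⟩
  exact eq_ancestor_succ_of_mem_pathEdge hy (by omega) (Finset.mem_inter.1 hz).1
    (pathEdge_inter_pathEdge_succ_subset hy hy ht hz)

lemma isMonotonePath_pathEdge {i : ℕ} {x : V} (hy : y ∈ T.L h) (hi : i < h)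
    (hx : x ∈ T.L i ∪ T.L' i) (hxe : x ∈ T.pathEdge i y) :
    IsMonotonePath T i x (T.pathEdge · y) y := by
  refine ⟨fun t _ ht => pathEdge_mem_seg hy ht, hxe, ?_, hy, fun t _ ht => ?_,
    fun s t _ hst ht => disjoint_pathEdge hy hy hst ht, fun t hit ht hxt => ?_⟩
  · simpa [Nat.sub_add_cancel (by omega : 1 ≤ h), ancestor_height] using
      ancestor_succ_mem_pathEdge hy (by omega : h - 1 < h)
  · rw [pathEdge_inter_pathEdge_succ hy ht]
    exact ⟨Finset.card_singleton _,
      Finset.singleton_subset_iff.2 (ancestor_mem_L hy (by omega))⟩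
  · obtain hit' | hit' := Nat.lt_or_ge (i + 1) t
    · exact Finset.disjoint_left.1 (disjoint_pathEdge hy hy hit' ht) hxe hxt
    · obtain rfl : t = i + 1 := by omega
      have hx' : x ∈ T.L (i + 1) :=
        pathEdge_inter_pathEdge_succ_subset hy hy ht (Finset.mem_inter.2 ⟨hxe, hxt⟩)
      rcases Finset.mem_union.1 hx with hxL | hxL'
      · exact Finset.disjoint_left.1 (T.parts_disj₂ i hi) hxL hx'
      · exact Finset.disjoint_left.1 (T.parts_disj₃ i hi) hxL' hx'

lemma pathEdge_ne_of_ancestor_succ_ne {y' : V} (hy : y ∈ T.L h) (hy' : y' ∈ T.L h)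
    (ht : t < h) (hne : T.ancestor (t + 1) y ≠ T.ancestor (t + 1) y') :
    T.pathEdge t y ≠ T.pathEdge t y' := fun he =>
  hne (eq_ancestor_succ_of_mem_pathEdge hy' ht (he ▸ ancestor_succ_mem_pathEdge hy ht)
    (ancestor_mem_L hy ht))

lemma disjoint_pathEdge_of_lt {s : ℕ} {y' : V} (hy : y ∈ T.L h) (hy' : y' ∈ T.L h)
    (hst : s < t) (ht : t < h) (hne : T.ancestor t y ≠ T.ancestor t y') :
    Disjoint (T.pathEdge s y) (T.pathEdge t y') := by
  obtain hst' | hst' := Nat.lt_or_ge (s + 1) t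
  · exact disjoint_pathEdge hy hy' hst' ht
  obtain rfl : t = s + 1 := by omega
  refine Finset.disjoint_left.2 fun z hz hz' => hne ?_
  have hzL := pathEdge_inter_pathEdge_succ_subset hy hy' ht (Finset.mem_inter.2 ⟨hz, hz'⟩)
  rw [← eq_ancestor_succ_of_mem_pathEdge hy (by omega) hz hzL,
    ← eq_ancestor_of_mem_pathEdge hy' ht hz' hzL]

lemma disjoint_pathEdge_of_ne {y' : V} (hy : y ∈ T.L h) (hy' : y' ∈ T.L h) (ht : t < h)
    (hA : ∀ s, t ≤ s → s ≤ t + 1 → T.ancestor s y ≠ T.ancestor s y')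
    (hC : T.companion t y ≠ T.companion t y') :
    Disjoint (T.pathEdge t y) (T.pathEdge t y') := by
  have hne := pathEdge_ne_of_ancestor_succ_ne hy hy' ht (hA (t + 1) (by omega) le_rfl)
  refine Finset.disjoint_left.2 fun z hz hz' => ?_
  have hzLL' := T.expansion t ht _ (pathEdge_mem_seg hy ht) _ (pathEdge_mem_seg hy' ht) hne
    (Finset.mem_inter.2 ⟨hz, hz'⟩)
  rcases Finset.mem_union.1 hzLL' with hzL | hzL'
  · exact hA t le_rfl (by omega) ((eq_ancestor_of_mem_pathEdge hy ht hz hzL).symm.trans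
      (eq_ancestor_of_mem_pathEdge hy' ht hz' hzL))
  · exact hC ((eq_companion_of_mem_pathEdge hy ht hz hzL').symm.trans
      (eq_companion_of_mem_pathEdge hy' ht hz' hzL'))

lemma pathEdge_inter_pathEdge_subset_of_mem {x y' : V} (hy : y ∈ T.L h) (hy' : y' ∈ T.L h)
    (ht : t < h) (hne : T.ancestor (t + 1) y ≠ T.ancestor (t + 1) y')
    (hx : x ∈ T.pathEdge t y) (hx' : x ∈ T.pathEdge t y') :
    T.pathEdge t y ∩ T.pathEdge t y' ⊆ {x} := fun z hz =>
  Finset.mem_singleton.2 <| Finset.card_le_one.1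
    (T.linear t ht t ht _ (pathEdge_mem_seg hy ht) _ (pathEdge_mem_seg hy' ht)
      (pathEdge_ne_of_ancestor_succ_ne hy hy' ht hne)) z hz x (Finset.mem_inter.2 ⟨hx, hx'⟩)

variable (T) in
/-- The paths to `y` and `y'` use distinct vertices on every level below `i`; on level `h`
this says `y ≠ y'`. -/
def Separated (i : ℕ) (y y' : V) : Prop :=
  (∀ t, i < t → t ≤ h → T.ancestor t y ≠ T.ancestor t y') ∧
  (∀ t, i < t → t < h → T.companion t y ≠ T.companion t y')

lemma Separated.symm {i : ℕ} {y' : V} (hyy' : T.Separated i y y') : T.Separated i y' y :=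
  ⟨fun t ht ht' => (hyy'.1 t ht ht').symm, fun t ht ht' => (hyy'.2 t ht ht').symm⟩

lemma pathEdge_inter_pathEdge_subset_of_separated {i s : ℕ} {x y' : V} (hy : y ∈ T.L h)
    (hy' : y' ∈ T.L h) (hx : x ∈ T.pathEdge i y) (hx' : x ∈ T.pathEdge i y')
    (hyy' : T.Separated i y y') (hs : i ≤ s) (hsh : s < h) (hit : i ≤ t) (ht : t < h) :
    T.pathEdge s y ∩ T.pathEdge t y' ⊆ {x} := by
  rcases lt_trichotomy s t with hst | rfl | hst
  · rw [Finset.disjoint_iff_inter_eq_empty.1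
      (disjoint_pathEdge_of_lt hy hy' hst ht (hyy'.1 t (by omega) ht.le))]
    exact Finset.empty_subset _
  · obtain rfl | his := hs.eq_or_lt
    · exact pathEdge_inter_pathEdge_subset_of_mem hy hy' hsh (hyy'.1 _ (by omega) hsh) hx hx'
    · rw [Finset.disjoint_iff_inter_eq_empty.1 (disjoint_pathEdge_of_ne hy hy' hsh
        (fun u hu hu' => hyy'.1 u (by omega) (by omega)) (hyy'.2 s his hsh))]
      exact Finset.empty_subset _
  · rw [Finset.inter_comm, Finset.disjoint_iff_inter_eq_empty.1
      (disjoint_pathEdge_of_lt hy' hy hst hsh (hyy'.1 s (by omega) hsh.le).symm)]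
    exact Finset.empty_subset _

variable (T) in
noncomputable def through (S : Finset V) (j : ℕ) (z : V) : Finset V :=
  S.filter fun y => T.ancestor j y = z ∨ T.companion j y = z

lemma mem_pathEdge_of_mem_through {S : Finset V} {i : ℕ} {x : V} (hS : S ⊆ T.L h)
    (hi : i < h) (hy : y ∈ T.through S i x) : x ∈ T.pathEdge i y := by
  obtain ⟨hyS, rfl | rfl⟩ := Finset.mem_filter.1 hy
  · exact ancestor_mem_pathEdge (hS hyS) hi
  · exact (Finset.mem_inter.1 (companion_mem_inter (hS hyS) hi)).1

lemma card_through_le_ncard {S : Finset V} {i : ℕ} {x : V} (hS : S ⊆ T.L h) (hi : i < h)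
    (hx : x ∈ T.L i ∪ T.L' i) :
    (T.through S i x).card ≤
      Set.ncard {y : V | y ∈ S ∧ ∃ f : ℕ → Finset V, IsMonotonePath T i x f y} := by
  rw [← Set.ncard_coe_finset]
  refine Set.ncard_le_ncard (fun y hy => ?_) (S.finite_toSet.subset fun y hy => hy.1)
  have hyS := (Finset.mem_filter.1 hy).1
  exact ⟨hyS, _, isMonotonePath_pathEdge (hS hyS) hi hx (mem_pathEdge_of_mem_through hS hi hy)⟩

end path

variable {T} {S : Finset V}

lemma through_zero_root (hS : S ⊆ T.L h) : T.through S 0 T.w = S :=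
  Finset.filter_true_of_mem fun _ hy => Or.inl <| Finset.mem_singleton.1 <|
    T.L_zero ▸ ancestor_mem_L (hS hy) (Nat.zero_le h)

lemma exists_last_heavy_level (hS : S ⊆ T.L h) (c : ℕ) :
    ∃ i ≤ h - 1, ∃ x ∈ T.L i ∪ T.L' i, S.card ≤ c ^ i * (T.through S i x).card ∧
      ∀ j, i < j → j < h → ∀ z ∈ T.L j ∪ T.L' j, c ^ j * (T.through S j z).card < S.card := by
  classical
  let heavy (j : ℕ) : Prop := ∃ z ∈ T.L j ∪ T.L' j, S.card ≤ c ^ j * (T.through S j z).card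
  have heavy_zero : heavy 0 := ⟨T.w, by simp [T.L_zero], by simp [through_zero_root hS]⟩
  obtain ⟨x, hx, hxS⟩ := Nat.findGreatest_spec (Nat.zero_le _) heavy_zero
  refine ⟨_, Nat.findGreatest_le _, x, hx, hxS, fun j hij hj z hz => ?_⟩
  by_contra! hjz
  exact Nat.findGreatest_is_greatest hij (by omega) ⟨z, hz, hjz⟩

variable (T) in
noncomputable def conflicts (S : Finset V) (i : ℕ) (z : V) : Finset V :=
  insert z ((Finset.Ioo i h).biUnion fun t =>
    T.through S t (T.ancestor t z) ∪ T.through S t (T.companion t z))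

lemma mem_conflicts_of_not_separated {i : ℕ} {y z : V} (hy : y ∈ S)
    (hyz : ¬ T.Separated i y z) : y ∈ T.conflicts S i z := by
  simp only [Separated, not_and_or, not_forall, not_not] at hyz
  rcases hyz with ⟨t, hit, hth, hyzt⟩ | ⟨t, hit, hth, hyzt⟩
  · obtain rfl | hth := hth.eq_or_lt
    · rw [ancestor_height, ancestor_height] at hyzt
      rw [hyzt]
      exact Finset.mem_insert_self _ _
    refine Finset.mem_insert_of_mem (Finset.mem_biUnion.2 ⟨t, Finset.mem_Ioo.2 ⟨hit, hth⟩, ?_⟩)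
    exact Finset.mem_union_left _ (Finset.mem_filter.2 ⟨hy, Or.inl hyzt⟩)
  · refine Finset.mem_insert_of_mem (Finset.mem_biUnion.2 ⟨t, Finset.mem_Ioo.2 ⟨hit, hth⟩, ?_⟩)
    exact Finset.mem_union_right _ (Finset.mem_filter.2 ⟨hy, Or.inr hyzt⟩)

lemma card_conflicts_le {i B : ℕ} {z : V} (hz : z ∈ T.L h)
    (hB : ∀ t, i < t → t < h → ∀ v ∈ T.L t ∪ T.L' t, (T.through S t v).card ≤ B) :
    (T.conflicts S i z).card ≤ 2 * h * B + 1 := by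
  have hlevel : ∀ t ∈ Finset.Ioo i h,
      (T.through S t (T.ancestor t z) ∪ T.through S t (T.companion t z)).card ≤ 2 * B := by
    intro t ht
    obtain ⟨hit, hth⟩ := Finset.mem_Ioo.1 ht
    calc _ ≤ (T.through S t (T.ancestor t z)).card + (T.through S t (T.companion t z)).card :=
          Finset.card_union_le _ _
      _ ≤ B + B := add_le_add
          (hB t hit hth _ (Finset.mem_union_left _ (ancestor_mem_L hz hth.le)))
          (hB t hit hth _ (Finset.mem_union_right _ (companion_mem_L' hz hth)))
      _ = 2 * B := by ring
  calc (T.conflicts S i z).card ≤ (Finset.Ioo i h).card * (2 * B) + 1 :=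
        (Finset.card_insert_le _ _).trans
          (Nat.add_le_add_right (Finset.card_biUnion_le_card_mul _ _ _ hlevel) 1)
    _ ≤ 2 * h * B + 1 := by
        rw [Nat.card_Ioo, mul_left_comm, mul_assoc]
        gcongr
        omega

end LeveledLinearQuasiTree

open LeveledLinearQuasiTree in
/-- In a leveled linear quasi-tree of height `h` with a set `S ⊆ L h` of size at least
`(hpr)^h`, there is a vertex `x` (in some `L i ∪ L' i`) such that at least a
`1/(hpr)^{h-1}` fraction of `S` lies below `x`, and there is a spider centered at `x`
with `p` legs, each a monotone path from `x` to `S`, pairwise meeting only in `x`. -/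
theorem stmt_19 {V : Type*} [DecidableEq V] (r h p : ℕ) (hr : 3 ≤ r) (hh : 1 ≤ h)
    (hp : 1 ≤ p) (T : LeveledLinearQuasiTree V r h)
    (S : Finset V) (hS : S ⊆ T.L h) (hScard : (h * p * r) ^ h ≤ S.card) :
    ∃ i < h, ∃ x ∈ T.L i ∪ T.L' i,
      S.card ≤ (h * p * r) ^ (h - 1) *
        Set.ncard {y : V | y ∈ S ∧ ∃ f : ℕ → Finset V, IsMonotonePath T i x f y} ∧
      ∃ (legs : Fin p → ℕ → Finset V) (ends : Fin p → V),
        (∀ a : Fin p, ends a ∈ S ∧ IsMonotonePath T i x (legs a) (ends a)) ∧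
        (∀ a b : Fin p, a ≠ b → ∀ s t, i ≤ s → s < h → i ≤ t → t < h →
          legs a s ∩ legs b t ⊆ {x}) := by
  set c := h * p * r
  have hc : 3 * h * p ≤ c := by
    rw [show 3 * h * p = h * p * 3 by ring]; exact Nat.mul_le_mul_left _ hr
  have hc1 : 1 ≤ c := le_trans (by nlinarith) hc
  obtain ⟨i, hi, x, hx, hheavy, hlight⟩ := exists_last_heavy_level hS c
  have hih : i < h := by omega
  have hB : ∀ t, i < t → t < h → ∀ v ∈ T.L t ∪ T.L' t,
      (T.through S t v).card ≤ S.card / c ^ (i + 1) := fun t hit hth v hv =>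
    (Nat.le_div_iff_mul_le (pow_pos hc1 _)).2 <|
      (Nat.mul_le_mul_left _ (Nat.pow_le_pow_right hc1 hit)).trans
        (by rw [mul_comm]; exact (hlight t hit hth v hv).le)
  have hthrough : T.through S i x ⊆ S := Finset.filter_subset _ _
  obtain ⟨ends, hends, hsep⟩ := exists_pairwise_of_card_conflicts_le
    (fun _ _ => Separated.symm) (T.conflicts S i)
    (fun y hy z _ hyz => mem_conflicts_of_not_separated (hthrough hy) hyz)
    (fun z hz => card_conflicts_le (hS (hthrough hz)) hB)
    (sub_one_mul_lt_of_pow_le hc hp hih hScard hheavy (Nat.div_mul_le_self _ _))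
  have hends_mem (a : Fin p) : x ∈ T.pathEdge i (ends a) :=
    mem_pathEdge_of_mem_through hS hih (hends a)
  refine ⟨i, hih, x, hx, ?_, fun a => (T.pathEdge · (ends a)), ends,
    fun a => ⟨hthrough (hends a), isMonotonePath_pathEdge (hS (hthrough (hends a))) hih hx
      (hends_mem a)⟩,
    fun a b hab s t hs hsh ht hth => pathEdge_inter_pathEdge_subset_of_separated
      (hS (hthrough (hends a))) (hS (hthrough (hends b))) (hends_mem a) (hends_mem b)
      (hsep hab) hs hsh ht hth⟩
  calc S.card ≤ c ^ i * (T.through S i x).card := hheavy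
    _ ≤ c ^ (h - 1) * _ := Nat.mul_le_mul (Nat.pow_le_pow_right hc1 hi)
        (card_through_le_ncard hS hih hx)
end
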